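/- Suppose m = m(n) is a sequence of positive integers with m(n)/(β ln n) → 1 as n → ∞, where β > 0 is a fixed constant, and let α be the unique solution in (β, ∞) of the equation α − β·ln α = β − β·ln β + 1. Then for every fixed real z > 0, the quantity z·n^z·m^z·∫_0^∞ [1 − (1 − S_m(mξ)e^{−mξ})^n]·ξ^{z−1} dξ is asymptotically equivalent to α^z·n^z·(ln n)^z as n → ∞; equivalently, z·∫_0^∞ [1 − (1 − S_m(mξ)e^{−mξ})^n]·ξ^{z−1} dξ → (α/β)^z as n → ∞. -/

import Mathlib

open MeasureTheory Filter Real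

/-- `S m y = ∑_{l=0}^{m-1} y^l / l!`, the `m`-th partial sum of the Taylor series of `e^y`. -/
noncomputable def S (m : ℕ) (y : ℝ) : ℝ := ∑ l ∈ Finset.range m, y ^ l / (Nat.factorial l)

/-!
Write `T_m(x) = S_m(x) e^{-x} = 1 - F_m(x)` and `I(ξ) = ξ - 1 - log ξ`. The Chernoff bound and
Stirling's formula give `e^{-m I(ξ)} / (e m ξ) ≤ T_m(mξ) ≤ e^{-m I(ξ)}` (the upper bound for
`ξ ≥ 1`), so with `m ∼ β log n` the quantity `n T_m(mξ)` tends to `∞` where `I(ξ) < 1/β` and to `0`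
where `I(ξ) > 1/β`. The equation defining `α` says exactly that `I(α/β) = 1/β`, and `I` increases
on `[1, ∞)`; as `T_m` is antitone, `1 - (1 - T_m(mξ))^n` therefore tends to the indicator of
`ξ < α/β`. For large `n` it is dominated by `e^{c - ξ}` for a fixed `c`, and dominated convergence
yields `z ∫_0^{α/β} ξ^{z-1} dξ = (α/β)^z`.
-/

open Set Topology
open scoped Nat

lemma S_nonneg (m : ℕ) {y : ℝ} (hy : 0 ≤ y) : 0 ≤ S m y :=
  Finset.sum_nonneg fun l _ => by positivity

@[fun_prop]
lemma continuous_S (m : ℕ) : Continuous (S m) := by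
  unfold S; fun_prop

lemma S_succ (m : ℕ) (y : ℝ) : S (m + 1) y = S m y + y ^ m / (m ! : ℝ) :=
  Finset.sum_range_succ _ _

lemma hasDerivAt_S_succ (m : ℕ) (x : ℝ) : HasDerivAt (S (m + 1)) (S m x) x := by
  induction m with
  | zero =>
    have : S 1 = fun _ => 1 := by ext y; simp [S]
    simpa [this, S] using hasDerivAt_const x (1 : ℝ)
  | succ k ih =>
    have hterm : HasDerivAt (fun y : ℝ => y ^ (k + 1) / ((k + 1)! : ℝ)) (x ^ k / (k ! : ℝ)) x := by
      refine ((hasDerivAt_pow (k + 1) x).div_const ((k + 1)! : ℝ)).congr_deriv ?_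
      rw [Nat.factorial_succ]; push_cast; field_simp
    have hS : S (k + 1 + 1) = fun y => S (k + 1) y + y ^ (k + 1) / ((k + 1)! : ℝ) := by
      ext y; exact S_succ _ _
    rw [hS, S_succ]
    exact ih.add hterm

lemma pow_mul_S_le_exp (m : ℕ) {t y : ℝ} (ht₀ : 0 ≤ t) (ht₁ : t ≤ 1) (hy : 0 ≤ y) :
    t ^ m * S m y ≤ exp (t * y) := by
  refine le_trans ?_ (sum_le_exp_of_nonneg (mul_nonneg ht₀ hy) m)
  rw [S, Finset.mul_sum]
  refine Finset.sum_le_sum fun l hl => ?_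
  rw [mul_pow, ← mul_div_assoc]
  gcongr ?_ * _ / _
  exact pow_le_pow_of_le_one ht₀ ht₁ (Finset.mem_range.1 hl).le

-- `n! / (√(2n) (n/e)^n)` decreases from its value `e/√2` at `n = 1`.
lemma factorial_le_exp_one_mul_pow (k : ℕ) :
    (k ! : ℝ) ≤ exp 1 * ((k + 1) / exp 1) ^ (k + 1) := by
  have h : Stirling.stirlingSeq (k + 1) ≤ Stirling.stirlingSeq 1 :=
    Stirling.stirlingSeq'_antitone (Nat.zero_le k)
  rw [Stirling.stirlingSeq_one, Stirling.stirlingSeq,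
    div_le_div_iff₀ (by positivity) (by positivity), Nat.factorial_succ,
    Real.sqrt_mul zero_le_two] at h
  push_cast at h
  have hk : (1 : ℝ) ≤ k + 1 := by linarith [(k.cast_nonneg : (0:ℝ) ≤ k)]
  have hsqrt : √((k : ℝ) + 1) ≤ k + 1 := (Real.sqrt_le_left (by linarith)).2 (by nlinarith)
  have key : ((k : ℝ) + 1) * k ! * √2
      ≤ ((k : ℝ) + 1) * (exp 1 * ((k + 1) / exp 1) ^ (k + 1)) * √2 :=
    calc ((k : ℝ) + 1) * k ! * √2
        ≤ exp 1 * (√2 * √((k : ℝ) + 1) * ((k + 1) / exp 1) ^ (k + 1)) := h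
      _ ≤ exp 1 * (√2 * ((k : ℝ) + 1) * ((k + 1) / exp 1) ^ (k + 1)) := by gcongr
      _ = _ := by ring
  exact le_of_mul_le_mul_left (le_of_mul_le_mul_right key (by positivity)) (by positivity)

noncomputable def erlangTail (m : ℕ) (x : ℝ) : ℝ := S m x * exp (-x)

lemma erlangTail_nonneg (m : ℕ) {x : ℝ} (hx : 0 ≤ x) : 0 ≤ erlangTail m x :=
  mul_nonneg (S_nonneg m hx) (exp_pos _).le

lemma erlangTail_le_one (m : ℕ) {x : ℝ} (hx : 0 ≤ x) : erlangTail m x ≤ 1 := by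
  rw [erlangTail, exp_neg, ← div_eq_mul_inv, div_le_one (exp_pos x)]
  exact sum_le_exp_of_nonneg hx m

lemma erlangTail_antitoneOn (m : ℕ) : AntitoneOn (erlangTail m) (Ici 0) := by
  cases m with
  | zero => intro a _ b _ _; simp [erlangTail, S]
  | succ k =>
    have hderiv (x : ℝ) :
        HasDerivAt (erlangTail (k + 1)) (-(x ^ k / (k ! : ℝ) * exp (-x))) x := by
      refine ((hasDerivAt_S_succ k x).mul (hasDerivAt_neg x).exp).congr_deriv ?_
      rw [S_succ]; ring
    refine antitoneOn_of_hasDerivWithinAt_nonpos (convex_Ici 0)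
      (fun x _ => (hderiv x).continuousAt.continuousWithinAt)
      (fun x _ => (hderiv x).hasDerivWithinAt) fun x hx => ?_
    rw [interior_Ici] at hx
    have : 0 ≤ x ^ k / (k ! : ℝ) * exp (-x) := by have := hx.out.le; positivity
    linarith

noncomputable def erlangRate (ξ : ℝ) : ℝ := ξ - 1 - log ξ

lemma exp_neg_mul_erlangRate (m : ℕ) {ξ : ℝ} (hξ : 0 < ξ) :
    exp (-(m * erlangRate ξ)) = exp m * ξ ^ m * exp (-(m * ξ)) := by
  rw [← exp_log (pow_pos hξ m), Real.log_pow, ← exp_add, ← exp_add, erlangRate]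
  ring_nf

lemma erlangTail_le_exp_neg_rate (m : ℕ) {ξ : ℝ} (hξ : 1 ≤ ξ) :
    erlangTail m (m * ξ) ≤ exp (-(m * erlangRate ξ)) := by
  have hξ₀ : 0 < ξ := by linarith
  have h := pow_mul_S_le_exp m (inv_nonneg.2 hξ₀.le) (inv_le_one_of_one_le₀ hξ)
    (by positivity : (0 : ℝ) ≤ m * ξ)
  rw [inv_pow, inv_mul_eq_div, div_le_iff₀ (by positivity),
    show ξ⁻¹ * (m * ξ) = m by field_simp] at h
  rw [exp_neg_mul_erlangRate m hξ₀, erlangTail]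
  gcongr

lemma exp_neg_rate_le_erlangTail {m : ℕ} (hm : 0 < m) {ξ : ℝ} (hξ : 0 < ξ) :
    exp (-(m * erlangRate ξ)) ≤ exp 1 * m * ξ * erlangTail m (m * ξ) := by
  obtain ⟨k, rfl⟩ : ∃ k, m = k + 1 := ⟨m - 1, by omega⟩
  have hterm : ((k + 1 : ℕ) * ξ) ^ k / (k ! : ℝ) ≤ S (k + 1) ((k + 1 : ℕ) * ξ) := by
    rw [S_succ]; linarith [S_nonneg k (by positivity : (0 : ℝ) ≤ (k + 1 : ℕ) * ξ)]
  push_cast at hterm ⊢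
  calc exp (-((k + 1) * erlangRate ξ))
      = exp 1 * (k + 1) * ξ * (((k + 1) * ξ) ^ k / (exp 1 * ((k + 1) / exp 1) ^ (k + 1)))
          * exp (-((k + 1) * ξ)) := by
        have h := exp_neg_mul_erlangRate (k + 1) hξ
        rw [← exp_one_pow] at h
        push_cast at h
        rw [h, div_pow, mul_pow, pow_succ _ k, pow_succ _ k, pow_succ _ k]
        field_simp
    _ ≤ exp 1 * (k + 1) * ξ * (((k + 1) * ξ) ^ k / k !) * exp (-((k + 1) * ξ)) := by
        gcongr; exact factorial_le_exp_one_mul_pow k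
    _ ≤ exp 1 * (k + 1) * ξ * erlangTail (k + 1) ((k + 1) * ξ) := by
        rw [erlangTail, ← mul_assoc]; gcongr

lemma natCast_mul_erlangTail_le_exp (n m : ℕ) {ξ : ℝ} (hξ : 1 ≤ ξ) :
    n * erlangTail m (m * ξ) ≤ exp (log n - m * erlangRate ξ) := by
  rcases n.eq_zero_or_pos with rfl | hn
  · simpa using (exp_pos _).le
  rw [sub_eq_add_neg, exp_add, exp_log (by exact_mod_cast hn)]
  gcongr
  exact erlangTail_le_exp_neg_rate m hξ

lemma exp_le_natCast_mul_erlangTail {n m : ℕ} (hn : 0 < n) (hm : 0 < m) {ξ : ℝ} (hξ : 0 < ξ) :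
    exp (log n - m * erlangRate ξ + (-(1 + log ξ) - log m)) ≤ n * erlangTail m (m * ξ) := by
  have hm' : (0 : ℝ) < m := by exact_mod_cast hm
  have heq : exp (log n - m * erlangRate ξ + (-(1 + log ξ) - log m))
      = n * exp (-(m * erlangRate ξ)) / (exp 1 * m * ξ) := by
    rw [exp_add, exp_sub, exp_sub, exp_neg (1 + log ξ), exp_add, exp_log (by exact_mod_cast hn),
      exp_log hξ, exp_log hm', exp_neg (m * erlangRate ξ)]
    field_simp
  rw [heq, div_le_iff₀ (by positivity), mul_assoc]
  gcongr
  linarith [exp_neg_rate_le_erlangTail hm hξ]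

lemma erlangRate_div_eq_inv {α β : ℝ} (hα : 0 < α) (hβ : 0 < β)
    (h : α - β * log α = β - β * log β + 1) : erlangRate (α / β) = β⁻¹ := by
  rw [erlangRate, log_div hα.ne' hβ.ne']
  field_simp
  linarith

lemma erlangRate_add_mul_le {c ξ : ℝ} (hc : 0 < c) (hξ : 0 < ξ) :
    erlangRate c + (1 - c⁻¹) * (ξ - c) ≤ erlangRate ξ := by
  have h := log_le_sub_one_of_pos (div_pos hξ hc)
  rw [log_div hξ.ne' hc.ne'] at h
  have : ξ / c - 1 = c⁻¹ * (ξ - c) := by field_simp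
  rw [erlangRate, erlangRate]
  nlinarith

lemma erlangRate_strictMonoOn : StrictMonoOn erlangRate (Ici 1) := by
  intro x (hx : 1 ≤ x) y _ hxy
  have hx₀ : 0 < x := by linarith
  have h := log_lt_sub_one_of_pos (div_pos (hx₀.trans hxy) hx₀) (by
    rw [ne_eq, div_eq_one_iff_eq hx₀.ne']; exact hxy.ne')
  rw [log_div (by linarith) hx₀.ne'] at h
  have : y / x - 1 ≤ y - x := by
    rw [div_sub_one hx₀.ne', div_le_iff₀ hx₀]; nlinarith
  rw [erlangRate, erlangRate]
  linarith

lemma one_sub_one_sub_pow_nonneg {p : ℝ} (hp₀ : 0 ≤ p) (hp₁ : p ≤ 1) (n : ℕ) :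
    0 ≤ 1 - (1 - p) ^ n :=
  sub_nonneg.2 (pow_le_one₀ (by linarith) (by linarith))

lemma one_sub_one_sub_pow_le {p : ℝ} (hp : p ≤ 2) (n : ℕ) : 1 - (1 - p) ^ n ≤ n * p := by
  have := one_add_mul_le_pow (a := -p) (by linarith) n
  rw [← sub_eq_add_neg] at this
  linarith

lemma one_sub_pow_le_exp_neg_mul {p : ℝ} (hp : p ≤ 1) (n : ℕ) : (1 - p) ^ n ≤ exp (-(n * p)) := by
  rw [← mul_neg, exp_nat_mul]
  exact pow_le_pow_left₀ (by linarith) (by linarith [one_sub_le_exp_neg p]) n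

lemma tendsto_one_sub_one_sub_pow_of_atTop {p : ℕ → ℝ} (hp₁ : ∀ n, p n ≤ 1)
    (h : Tendsto (fun n => n * p n) atTop atTop) :
    Tendsto (fun n => 1 - (1 - p n) ^ n) atTop (𝓝 1) := by
  have hexp : Tendsto (fun n : ℕ => 1 - exp (-(n * p n))) atTop (𝓝 1) := by
    simpa using (tendsto_exp_neg_atTop_nhds_zero.comp h).const_sub 1
  refine tendsto_of_tendsto_of_tendsto_of_le_of_le hexp tendsto_const_nhds (fun n => ?_) fun n => ?_
  · linarith [one_sub_pow_le_exp_neg_mul (hp₁ n) n]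
  · linarith [pow_nonneg (sub_nonneg.2 (hp₁ n)) n]

lemma tendsto_one_sub_one_sub_pow_of_zero {p : ℕ → ℝ} (hp₀ : ∀ n, 0 ≤ p n) (hp₁ : ∀ n, p n ≤ 1)
    (h : Tendsto (fun n => n * p n) atTop (𝓝 0)) :
    Tendsto (fun n => 1 - (1 - p n) ^ n) atTop (𝓝 0) :=
  squeeze_zero (fun n => one_sub_one_sub_pow_nonneg (hp₀ n) (hp₁ n) n)
    (fun n => one_sub_one_sub_pow_le (by linarith [hp₁ n]) n) h

lemma tendsto_log_natCast_atTop : Tendsto (fun n : ℕ => log n) atTop atTop :=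
  tendsto_log_atTop.comp tendsto_natCast_atTop_atTop

section Critical

variable {β : ℝ} {m : ℕ → ℕ} (hβ : 0 < β)
  (hcrit : Tendsto (fun n : ℕ => (m n : ℝ) / (β * log n)) atTop (𝓝 1))
include hβ hcrit

lemma tendsto_natCast_atTop_of_critical : Tendsto (fun n : ℕ => (m n : ℝ)) atTop atTop :=
  Tendsto.num (tendsto_log_natCast_atTop.const_mul_atTop hβ) one_pos hcrit

lemma tendsto_log_div_of_critical : Tendsto (fun n : ℕ => log n / m n) atTop (𝓝 β⁻¹) := by
  have h := (hcrit.inv₀ one_ne_zero).const_mul β⁻¹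
  rw [inv_one, mul_one] at h
  refine h.congr fun n => ?_
  rw [inv_div]; field_simp

lemma tendsto_log_sub_mul_add_div_of_critical (u : ℝ) {r : ℕ → ℝ}
    (hr : Tendsto (fun n : ℕ => r n / m n) atTop (𝓝 0)) :
    Tendsto (fun n : ℕ => (log n - m n * u + r n) / m n) atTop (𝓝 (β⁻¹ - u)) := by
  have h := ((tendsto_log_div_of_critical hβ hcrit).sub_const u).add hr
  rw [add_zero] at h
  refine h.congr' ?_
  filter_upwards [(tendsto_natCast_atTop_of_critical hβ hcrit).eventually_gt_atTop 0] with n hn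
  field_simp

lemma tendsto_log_sub_mul_add_atTop_of_critical {u : ℝ} (hu : u < β⁻¹) {r : ℕ → ℝ}
    (hr : Tendsto (fun n : ℕ => r n / m n) atTop (𝓝 0)) :
    Tendsto (fun n : ℕ => log n - m n * u + r n) atTop atTop :=
  Tendsto.num (tendsto_natCast_atTop_of_critical hβ hcrit) (sub_pos.2 hu)
    (tendsto_log_sub_mul_add_div_of_critical hβ hcrit u hr)

lemma tendsto_log_sub_mul_atBot_of_critical {u : ℝ} (hu : β⁻¹ < u) :
    Tendsto (fun n : ℕ => log n - m n * u) atTop atBot := by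
  have h := tendsto_log_sub_mul_add_div_of_critical hβ hcrit u (r := 0) (by simp)
  simp only [Pi.zero_apply, add_zero] at h
  refine tendsto_neg_atTop_iff.1 (Tendsto.num (tendsto_natCast_atTop_of_critical hβ hcrit)
    (by linarith : 0 < -(β⁻¹ - u)) ?_)
  simpa only [neg_div] using h.neg

lemma tendsto_natCast_mul_erlangTail_atTop (hm : ∀ n, 0 < m n) {ξ : ℝ} (hξ : 0 < ξ)
    (hI : erlangRate ξ < β⁻¹) :
    Tendsto (fun n : ℕ => n * erlangTail (m n) (m n * ξ)) atTop atTop := by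
  have hM := tendsto_natCast_atTop_of_critical hβ hcrit
  have hr : Tendsto (fun n : ℕ => (-(1 + log ξ) - log (m n)) / m n) atTop (𝓝 0) := by
    have h₁ := (tendsto_const_nhds (x := -(1 + log ξ))).div_atTop hM
    have h₂ := isLittleO_log_id_atTop.tendsto_div_nhds_zero.comp hM
    simpa [sub_div] using h₁.sub h₂
  refine tendsto_atTop_mono' _ ?_
    (tendsto_exp_atTop.comp (tendsto_log_sub_mul_add_atTop_of_critical hβ hcrit hI hr))
  filter_upwards [eventually_gt_atTop 0] with n hn
  exact exp_le_natCast_mul_erlangTail hn (hm n) hξ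

lemma tendsto_natCast_mul_erlangTail_zero {ξ : ℝ} (hξ : 1 ≤ ξ) (hI : β⁻¹ < erlangRate ξ) :
    Tendsto (fun n : ℕ => n * erlangTail (m n) (m n * ξ)) atTop (𝓝 0) :=
  squeeze_zero
    (fun n => mul_nonneg n.cast_nonneg (erlangTail_nonneg _ (by positivity)))
    (fun n => natCast_mul_erlangTail_le_exp n (m n) hξ)
    (tendsto_exp_atBot.comp (tendsto_log_sub_mul_atBot_of_critical hβ hcrit hI))

lemma eventually_natCast_mul_erlangTail_le_exp_sub {c : ℝ} (hc : 1 < c)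
    (hI : β⁻¹ < erlangRate c) :
    ∀ᶠ n : ℕ in atTop, ∀ ξ, c ≤ ξ → n * erlangTail (m n) (m n * ξ) ≤ exp (c - ξ) := by
  have hc' : 0 < 1 - c⁻¹ := sub_pos.2 (inv_lt_one_of_one_lt₀ hc)
  filter_upwards [(tendsto_log_sub_mul_atBot_of_critical hβ hcrit hI).eventually_le_atBot 0,
    ((tendsto_natCast_atTop_of_critical hβ hcrit).atTop_mul_const hc').eventually_ge_atTop 1]
    with n hlog hmc ξ hξ
  refine (natCast_mul_erlangTail_le_exp n (m n) (hc.le.trans hξ)).trans (exp_le_exp.2 ?_)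
  have hrate := mul_le_mul_of_nonneg_left
    (erlangRate_add_mul_le (c := c) (ξ := ξ) (by linarith) (by linarith)) (m n).cast_nonneg
  nlinarith [mul_nonneg (sub_nonneg.2 hmc) (sub_nonneg.2 hξ)]

lemma tendsto_natCast_mul_erlangTail_atTop_of_lt (hm : ∀ n, 0 < m n) {b : ℝ} (hb : 1 < b)
    (hrate : erlangRate b = β⁻¹) {ξ : ℝ} (hξ : 0 < ξ) (hξb : ξ < b) :
    Tendsto (fun n : ℕ => n * erlangTail (m n) (m n * ξ)) atTop atTop := by
  have hξ' : max ξ 1 < b := max_lt hξb hb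
  refine tendsto_atTop_mono (fun n => ?_) (tendsto_natCast_mul_erlangTail_atTop hβ hcrit hm
    (by positivity) (hrate ▸ erlangRate_strictMonoOn (le_max_right ξ 1) hb.le hξ'))
  gcongr
  exact erlangTail_antitoneOn _ (mem_Ici.2 (by positivity)) (mem_Ici.2 (by positivity))
    (by gcongr; exact le_max_left ξ 1)

end Critical

lemma tendsto_mul_integral_mul_rpow_of_threshold {G : ℕ → ℝ → ℝ} {b c z : ℝ} (hb : 0 < b)
    (hz : 0 < z) (hmeas : ∀ n, Measurable (G n)) (hG₀ : ∀ n, ∀ ξ > 0, 0 ≤ G n ξ)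
    (hdom : ∀ᶠ n in atTop, ∀ ξ > 0, G n ξ ≤ exp (c - ξ))
    (hlt : ∀ ξ ∈ Ioo 0 b, Tendsto (G · ξ) atTop (𝓝 1))
    (hgt : ∀ ξ > b, Tendsto (G · ξ) atTop (𝓝 0)) :
    Tendsto (fun n => z * ∫ ξ in Ioi 0, G n ξ * ξ ^ (z - 1)) atTop (𝓝 (b ^ z)) := by
  have hlim : Tendsto (fun n => ∫ ξ in Ioi 0, G n ξ * ξ ^ (z - 1)) atTop
      (𝓝 (∫ ξ in Ioi 0, (Iio b).indicator (fun ξ => ξ ^ (z - 1)) ξ)) := by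
    refine tendsto_integral_filter_of_dominated_convergence
      (fun ξ => exp c * (exp (-ξ) * ξ ^ (z - 1)))
      (.of_forall fun n => ((hmeas n).mul (measurable_id.pow_const _)).aestronglyMeasurable)
      ?_ ((GammaIntegral_convergent hz).const_mul _) ?_
    · filter_upwards [hdom] with n hn
      filter_upwards [ae_restrict_mem measurableSet_Ioi] with ξ (hξ : 0 < ξ)
      rw [norm_mul, norm_of_nonneg (hG₀ n ξ hξ), norm_of_nonneg (rpow_nonneg hξ.le _),
        ← mul_assoc, ← exp_add, ← sub_eq_add_neg]
      gcongr
      exact hn ξ hξ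
    · filter_upwards [ae_restrict_mem measurableSet_Ioi,
        ae_restrict_of_ae ((volume : Measure ℝ).ae_ne b)]
        with ξ (hξ : 0 < ξ) hξb
      rcases hξb.lt_or_gt with h | h
      · simpa [indicator_of_mem (show ξ ∈ Iio b from h)] using
          (hlt ξ ⟨hξ, h⟩).mul_const (ξ ^ (z - 1))
      · simpa [indicator_of_notMem (show ξ ∉ Iio b from h.not_gt)] using
          (hgt ξ h).mul_const (ξ ^ (z - 1))
  have hval : ∫ ξ in Ioi 0, (Iio b).indicator (fun ξ => ξ ^ (z - 1)) ξ = b ^ z / z := by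
    rw [setIntegral_indicator measurableSet_Iio, Ioi_inter_Iio, ← integral_Ioc_eq_integral_Ioo,
      ← intervalIntegral.integral_of_le hb.le, integral_rpow (Or.inl (by linarith)),
      sub_add_cancel, zero_rpow hz.ne', sub_zero]
  rw [hval] at hlim
  simpa [mul_div_cancel₀ _ hz.ne'] using hlim.const_mul z

/-- Critical case `m ∼ β ln n`: for every fixed `z > 0`,
`z ∫_0^∞ [1 − (1 − S_m(mξ)e^{−mξ})^n] ξ^{z−1} dξ → (α/β)^z`, where `α` is the unique solution of
`α − β ln α = β − β ln β + 1` in `(β, ∞)`; i.e. the `z`-th moment of the maximum of `n`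
independent Erlang(m, 1/n) random variables is asymptotically `α^z n^z (ln n)^z`. -/
theorem stmt3 (β : ℝ) (hβ : 0 < β) (m : ℕ → ℕ) (hm : ∀ n, 0 < m n)
    (hcrit : Tendsto (fun n : ℕ => (m n : ℝ) / (β * Real.log n)) atTop (nhds 1))
    (α : ℝ) (hαβ : β < α)
    (hα : α - β * Real.log α = β - β * Real.log β + 1)
    (z : ℝ) (hz : 0 < z) :
    Tendsto (fun n : ℕ =>
        z * ∫ ξ in Set.Ioi (0 : ℝ),
          (1 - (1 - S (m n) ((m n : ℝ) * ξ) * Real.exp (-((m n : ℝ) * ξ))) ^ n)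
            * ξ ^ (z - 1))
      atTop (nhds ((α / β) ^ z)) := by
  have hb : 1 < α / β := (one_lt_div hβ).2 hαβ
  have hrate : erlangRate (α / β) = β⁻¹ := erlangRate_div_eq_inv (hβ.trans hαβ) hβ hα
  have hrate_lt {ξ : ℝ} (hξ : α / β < ξ) : β⁻¹ < erlangRate ξ :=
    hrate ▸ erlangRate_strictMonoOn hb.le (mem_Ici.2 (by linarith)) hξ
  have hT₀ (n : ℕ) {ξ : ℝ} (hξ : 0 ≤ ξ) : 0 ≤ erlangTail (m n) (m n * ξ) :=
    erlangTail_nonneg _ (by positivity)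
  have hT₁ (n : ℕ) {ξ : ℝ} (hξ : 0 ≤ ξ) : erlangTail (m n) (m n * ξ) ≤ 1 :=
    erlangTail_le_one _ (by positivity)
  refine tendsto_mul_integral_mul_rpow_of_threshold (c := α / β + 1)
    (G := fun n ξ => 1 - (1 - erlangTail (m n) (m n * ξ)) ^ n) (by positivity) hz
    (fun n => by unfold erlangTail; fun_prop)
    (fun n ξ hξ => one_sub_one_sub_pow_nonneg (hT₀ n hξ.le) (hT₁ n hξ.le) n) ?_
    (fun ξ hξ => tendsto_one_sub_one_sub_pow_of_atTop (fun n => hT₁ n hξ.1.le)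
      (tendsto_natCast_mul_erlangTail_atTop_of_lt hβ hcrit hm hb hrate hξ.1 hξ.2))
    (fun ξ hξ => tendsto_one_sub_one_sub_pow_of_zero (fun n => hT₀ n (by linarith))
      (fun n => hT₁ n (by linarith))
      (tendsto_natCast_mul_erlangTail_zero hβ hcrit (by linarith) (hrate_lt hξ)))
  filter_upwards [eventually_natCast_mul_erlangTail_le_exp_sub hβ hcrit (by linarith)
    (hrate_lt (lt_add_one _))] with n hn ξ hξ
  by_cases hξc : α / β + 1 ≤ ξ
  · exact (one_sub_one_sub_pow_le (by linarith [hT₁ n hξ.le]) n).trans (hn ξ hξc)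
  · calc _ ≤ (1 : ℝ) := by linarith [pow_nonneg (sub_nonneg.2 (hT₁ n hξ.le)) n]
      _ ≤ _ := one_le_exp (by linarith)
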